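/- arXiv:1306.3638 — 3 statements merged into one kernel-verified Lean document; each statement's English description precedes it below -/
import Mathlib

section
/- Let v_−, x_− ∈ ℝⁿ with v_−·x_− = 0 and |v_−| ≥ μ, and let 0 < r < min(|v_−|/2^{3/2}, 1). Then for every f ∈ M_r, ‖A(f)‖ ≤ (β₂ (n(3|x_−| + 2r) + 2√n) / ((|v_−|/2^{3/2} − r)(1−r)^α)) · ( 2/(α(|v_−|/2^{3/2} − r)) + 1/((α+1)(1−r)) ). -/
open MeasureTheory Real Filter Set Topology RealInnerProductSpace

noncomputable section

namespace Paper

/-- ℝⁿ -/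
abbrev Euc (n : ℕ) : Type := EuclideanSpace ℝ (Fin n)

variable {n : ℕ}

/-- the norm `sup_{t ≤ 0} ‖f t‖ + sup_{t ≥ 0} ‖f t‖/(1+t)` on the space `M_r`. -/
def Mnorm (f : ℝ → Euc n) : ℝ :=
  sSup ((fun t => ‖f t‖) '' Iic 0) + sSup ((fun t => ‖f t‖ / (1 + t)) '' Ici 0)

/-- membership in the complete metric space `M_r`. -/
def MemM (r : ℝ) (f : ℝ → Euc n) : Prop :=
  Continuous f ∧ BddAbove ((fun t => ‖f t‖) '' Iic 0) ∧
    BddAbove ((fun t => ‖f t‖ / (1 + t)) '' Ici 0) ∧ Mnorm f ≤ r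

/-- the long range decay conditions on `V^l`. -/
def LongRange (α βl0 βl1 βl2 : ℝ) (Vl : Euc n → ℝ) : Prop :=
  ContDiff ℝ 2 Vl ∧
    (∀ x, |Vl x| ≤ βl0 * (1 + ‖x‖) ^ (-α)) ∧
    (∀ x, ‖gradient Vl x‖ ≤ βl1 * (1 + ‖x‖) ^ (-(α + 1))) ∧
    (∀ x, ‖iteratedFDeriv ℝ 2 Vl x‖ ≤ βl2 * (1 + ‖x‖) ^ (-(α + 2)))

/-- the short range decay conditions on `V^s`. -/
def ShortRange (α βs1 βs2 βs3 : ℝ) (Vs : Euc n → ℝ) : Prop :=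
  ContDiff ℝ 2 Vs ∧
    (∀ x, |Vs x| ≤ βs1 * (1 + ‖x‖) ^ (-(α + 1))) ∧
    (∀ x, ‖gradient Vs x‖ ≤ βs2 * (1 + ‖x‖) ^ (-(α + 2))) ∧
    (∀ x, ‖iteratedFDeriv ℝ 2 Vs x‖ ≤ βs3 * (1 + ‖x‖) ^ (-(α + 3)))

/-- `z` is a C² solution of `z'' = Fl ∘ z` with `z 0 = x0`, `z' → w` along the filter `l`
(`atBot` for `z_-`, `atTop` for `z_+`), satisfying the growth bound `‖z t - x0 - t w‖ ≤ C |t|`. -/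
def IsFreeSol (Fl : Euc n → Euc n) (x0 w : Euc n) (l : Filter ℝ) (C : ℝ)
    (z : ℝ → Euc n) : Prop :=
  ContDiff ℝ 2 z ∧ (∀ t, deriv (deriv z) t = Fl (z t)) ∧ z 0 = x0 ∧
    Tendsto (fun t => deriv z t) l (𝓝 w) ∧ ∀ t, ‖z t - x0 - t • w‖ ≤ C * |t|

/-- the map `A` (or `𝒜` when `xm = 0` and `zm` already contains the base point). -/
def Aop (Fl F : Euc n → Euc n) (zm : ℝ → Euc n) (xm : Euc n)
    (f : ℝ → Euc n) (t : ℝ) : Euc n :=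
  ∫ σ in Iic t, ∫ τ in Iic σ, (F (zm τ + xm + f τ) - Fl (zm τ))

/-- the vector `l(v_-,x_-,y_-)`. -/
def lInt (Fl Fs F : Euc n → Euc n) (zm : ℝ → Euc n) (xm : Euc n) (ym : ℝ → Euc n) : Euc n :=
  (∫ σ in Iic (0:ℝ), ∫ τ in Iic σ, (F (zm τ + xm + ym τ) - Fl (zm τ))) -
    ∫ σ in Ici (0:ℝ), ∫ τ in Ici σ, Fs (zm τ + xm + ym τ)

/-- the vector `l₁(v_-,x_-)`. -/
def l1Int (Fl : Euc n → Euc n) (zp : ℝ → Euc n) (xm : Euc n) : Euc n :=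
  -∫ σ in Ici (0:ℝ), ∫ τ in Ici σ, (Fl (zp τ + xm) - Fl (zp τ))

/-- the vector `l₂(v_-,x_-,y_-)`. -/
def l2Int (Fl : Euc n → Euc n) (zm zp : ℝ → Euc n) (xm : Euc n) (ym : ℝ → Euc n) : Euc n :=
  -∫ σ in Ici (0:ℝ), ∫ τ in Ici σ, (Fl (zm τ + xm + ym τ) - Fl (zp τ + xm))

/-- the function `y_+`. -/
def yplusInt (Fl F : Euc n → Euc n) (zm zp : ℝ → Euc n) (xm : Euc n) (ym : ℝ → Euc n)
    (t : ℝ) : Euc n :=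
  ∫ σ in Ici t, ∫ τ in Ici σ, (F (zm τ + xm + ym τ) - Fl (zp τ))

/-- the vector `W(v_-,x_-)`. -/
def Wvec (Fl : Euc n → Euc n) (zm zp : ℝ → Euc n) (xm : Euc n) : Euc n :=
  (∫ σ in Iic (0:ℝ), ∫ τ in Iic σ, (Fl (zm τ + xm) - Fl (zm τ))) -
    ∫ σ in Ici (0:ℝ), ∫ τ in Ici σ, (Fl (zp τ + xm) - Fl (zp τ))

/-- the map `𝒢_{v_-,x_-}`; here `zm = z_-(v_-,x_-,·)` contains the base point `x_-`
and `zp h = z_+(ã, x_- + h, ·)`. -/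
def Gmap (Fl Fs F : Euc n → Euc n) (zm : ℝ → Euc n) (zp : Euc n → ℝ → Euc n)
    (ym : ℝ → Euc n) (h : Euc n) : Euc n :=
  lInt Fl Fs F zm 0 ym -
    ∫ σ in Ici (0:ℝ), ∫ τ in Ici σ, (Fl (zm τ + ym τ) - Fl (zp h τ))

/-- the vector `W̃(v_-,x_-)`; here `zp0 = z_+(ã, x_-, ·)`. -/
def Wtilde (Fl : Euc n → Euc n) (zm zp0 : ℝ → Euc n) : Euc n :=
  (∫ τ in Iic (0:ℝ), Fl (zm τ)) + ∫ τ in Ici (0:ℝ), Fl (zp0 τ)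


section AuxLemmas

open MeasureTheory Real Filter Set Topology

lemma hasDeriv_aux {c κ p : ℝ} (hκ : 0 < κ) (hp : 0 < p) {x : ℝ} (hx : 0 < c + κ * x) :
    HasDerivAt (fun τ : ℝ => -((c + κ * τ) ^ (-p)) / (κ * p)) ((c + κ * x) ^ (-(p+1))) x := by
  have h1 : HasDerivAt (fun τ : ℝ => c + κ * τ) κ x := by
    simpa using ((hasDerivAt_id x).const_mul κ).const_add c
  have h2 := h1.rpow_const (p := -p) (Or.inl hx.ne')
  have h3 := h2.neg.div_const (κ * p)
  refine h3.congr_deriv ?_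
  rw [show -p - 1 = -(p+1) by ring]
  field_simp

lemma tendsto_aux {c κ p : ℝ} (hκ : 0 < κ) (hp : 0 < p) :
    Tendsto (fun τ : ℝ => -((c + κ * τ) ^ (-p)) / (κ * p)) atTop (𝓝 0) := by
  have h0 : Tendsto (fun τ : ℝ => c + κ * τ) atTop atTop :=
    tendsto_atTop_add_const_left _ c (tendsto_id.const_mul_atTop hκ)
  have h1 := ((tendsto_rpow_neg_atTop hp).comp h0).neg.div_const (κ * p)
  simpa using h1

lemma key_Ioi {c κ p : ℝ} (a : ℝ) (hca : 0 < c + κ * a) (hκ : 0 < κ) (hp : 0 < p) :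
    IntegrableOn (fun τ : ℝ => (c + κ * τ) ^ (-(p+1))) (Ioi a) ∧
      ∫ τ in Ioi a, (c + κ * τ) ^ (-(p+1)) = (c + κ * a) ^ (-p) / (κ * p) := by
  have hpos : ∀ x : ℝ, a ≤ x → 0 < c + κ * x := fun x hx => by nlinarith
  have hderiv : ∀ x ∈ Ioi a, HasDerivAt (fun τ : ℝ => -((c + κ * τ) ^ (-p)) / (κ * p))
      ((c + κ * x) ^ (-(p+1))) x := fun x hx => hasDeriv_aux hκ hp (hpos x (le_of_lt hx))
  have hcont : ContinuousWithinAt (fun τ : ℝ => -((c + κ * τ) ^ (-p)) / (κ * p)) (Ici a) a :=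
    (hasDeriv_aux hκ hp hca).continuousAt.continuousWithinAt
  have hnonneg : ∀ x ∈ Ioi a, 0 ≤ (c + κ * x) ^ (-(p+1)) := fun x hx =>
    Real.rpow_nonneg (hpos x (le_of_lt hx)).le _
  have htend := tendsto_aux (c := c) hκ hp
  have hint : IntegrableOn (fun τ : ℝ => (c + κ * τ) ^ (-(p+1))) (Ioi a) :=
    integrableOn_Ioi_deriv_of_nonneg hcont hderiv hnonneg htend
  refine ⟨hint, ?_⟩
  rw [integral_Ioi_of_hasDerivAt_of_tendsto hcont hderiv hint htend]
  ring

lemma key_Iic {c κ p : ℝ} (σ : ℝ) (hcs : 0 < c - κ * σ) (hκ : 0 < κ) (hp : 0 < p) :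
    IntegrableOn (fun τ : ℝ => (c - κ * τ) ^ (-(p+1))) (Iic σ) ∧
      ∫ τ in Iic σ, (c - κ * τ) ^ (-(p+1)) = (c - κ * σ) ^ (-p) / (κ * p) := by
  obtain ⟨hi, hv⟩ := key_Ioi (c := c) (κ := κ) (-σ)
    (by rw [mul_neg, ← sub_eq_add_neg]; exact hcs) hκ hp
  have hfun : (fun τ : ℝ => (c - κ * τ) ^ (-(p+1))) =
      (fun u : ℝ => (c + κ * u) ^ (-(p+1))) ∘ (fun x : ℝ => -x) := by
    funext τ; simp [Function.comp, mul_neg, sub_eq_add_neg]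
  constructor
  · have hIci : IntegrableOn (fun u : ℝ => (c + κ * u) ^ (-(p+1))) (Ici (-σ)) :=
      (integrableOn_Ici_iff_integrableOn_Ioi).mpr hi
    have hemb : MeasurableEmbedding (fun x : ℝ => -x) :=
      (Homeomorph.neg ℝ).isClosedEmbedding.measurableEmbedding
    have hpre : (fun x : ℝ => -x) ⁻¹' (Ici (-σ)) = Iic σ := by
      ext x; simp
    have hmap : Measure.map (fun x : ℝ => -x) ((volume : Measure ℝ).restrict (Iic σ)) =
        (volume : Measure ℝ).restrict (Ici (-σ)) := by
      rw [← hpre, ← Measure.restrict_map measurable_neg measurableSet_Ici,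
        Measure.map_neg_eq_self]
    rw [hfun]
    have h2 := (hemb.integrable_map_iff (g := fun u : ℝ => (c + κ * u) ^ (-(p+1)))
      (μ := (volume : Measure ℝ).restrict (Iic σ))).mp
    rw [hmap] at h2
    exact h2 hIci
  · have hneg := integral_comp_neg_Iic σ (fun u : ℝ => (c + κ * u) ^ (-(p+1)))
    calc ∫ τ in Iic σ, (c - κ * τ) ^ (-(p+1))
        = ∫ τ in Iic σ, (c + κ * (-τ)) ^ (-(p+1)) := by
          have : (fun τ : ℝ => (c - κ * τ) ^ (-(p+1))) =
              (fun τ : ℝ => (c + κ * (-τ)) ^ (-(p+1))) := by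
            funext τ; rw [mul_neg, ← sub_eq_add_neg]
          rw [this]
      _ = ∫ u in Ioi (-σ), (c + κ * u) ^ (-(p+1)) := hneg
      _ = (c + κ * (-σ)) ^ (-p) / (κ * p) := hv
      _ = (c - κ * σ) ^ (-p) / (κ * p) := by rw [mul_neg, ← sub_eq_add_neg]

lemma grad_lip {n : ℕ} {V : Euc n → ℝ} (hV : ContDiff ℝ 2 V) {K : ℝ}
    {x y : Euc n}
    (hK : ∀ z ∈ segment ℝ x y, ‖iteratedFDeriv ℝ 2 V z‖ ≤ K) :
    ‖gradient V y - gradient V x‖ ≤ K * ‖y - x‖ := by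
  have hd : ContDiff ℝ 1 (fderiv ℝ V) := hV.fderiv_right (by norm_num)
  have hnorm : ∀ z, ‖fderiv ℝ (fderiv ℝ V) z‖ = ‖iteratedFDeriv ℝ 2 V z‖ := by
    intro z
    rw [show ‖fderiv ℝ (fderiv ℝ V) z‖ = ‖iteratedFDeriv ℝ 0 (fderiv ℝ (fderiv ℝ V)) z‖ by
      rw [norm_iteratedFDeriv_zero], norm_iteratedFDeriv_fderiv, norm_iteratedFDeriv_fderiv]
  have key := Convex.norm_image_sub_le_of_norm_fderiv_le (𝕜 := ℝ) (f := fderiv ℝ V)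
    (fun z _ => (hd.differentiable one_ne_zero).differentiableAt)
    (fun z hz => by rw [hnorm]; exact hK z hz)
    (convex_segment x y) (left_mem_segment ℝ x y) (right_mem_segment ℝ x y)
  have hg : ∀ u, gradient V u = (InnerProductSpace.toDual ℝ _).symm (fderiv ℝ V u) :=
    fun u => rfl
  rw [hg, hg, ← map_sub, LinearIsometryEquiv.norm_map]
  exact key

end AuxLemmas

set_option maxHeartbeats 1000000 in
theorem statement_2
    (n : ℕ) (hn : 2 ≤ n) (α : ℝ) (hα0 : 0 < α) (hα1 : α ≤ 1)
    (Vl Vs : Euc n → ℝ) (βl0 βl1 βl2 βs1 βs2 βs3 : ℝ)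
    (hβl0 : 0 < βl0) (hβl1 : 0 < βl1) (hβl2 : 0 < βl2)
    (hβs1 : 0 < βs1) (hβs2 : 0 < βs2) (hβs3 : 0 < βs3)
    (hVl : LongRange α βl0 βl1 βl2 Vl) (hVs : ShortRange α βs1 βs2 βs3 Vs)
    (Fl Fs F : Euc n → Euc n)
    (hFl : ∀ y, Fl y = -gradient Vl y) (hFs : ∀ y, Fs y = -gradient Vs y)
    (hF : ∀ y, F y = Fl y + Fs y)
    (vm xm : Euc n) (hperp : ⟪vm, xm⟫ = 0) (hvm : Real.sqrt (2 ^ 5 * (n : ℝ) * max βl1 βl2 / α) ≤ ‖vm‖)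
    (zm : ℝ → Euc n) (hzm : IsFreeSol Fl 0 vm atBot (2 ^ ((5:ℝ)/2) * Real.sqrt n * βl1 / (α * ‖vm‖)) zm)
    (r : ℝ) (hr0 : 0 < r) (hr : r < min (‖vm‖ / 2 ^ ((3:ℝ)/2)) 1)
 :
    ∀ f : ℝ → Euc n, MemM r f →
      Mnorm (Aop Fl F zm xm f) ≤
        max βl2 βs2 * ((n : ℝ) * (3 * ‖xm‖ + 2 * r) + 2 * Real.sqrt n) /
            ((‖vm‖ / 2 ^ ((3:ℝ)/2) - r) * (1 - r) ^ α) *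
          (2 / (α * (‖vm‖ / 2 ^ ((3:ℝ)/2) - r)) + 1 / ((α + 1) * (1 - r))) := by
  intro f hf
  obtain ⟨hfc, hb1, hb2, hmn⟩ := hf
  have hmn' : sSup ((fun t => ‖f t‖) '' Iic 0) + sSup ((fun t => ‖f t‖ / (1 + t)) '' Ici 0) ≤ r :=
    hmn
  set w : ℝ := ‖vm‖ / 2 ^ ((3:ℝ)/2) with hw_def
  set c : ℝ := 1 - r with hc_def
  set κ : ℝ := w - r with hκ_def
  set B : ℝ := max βl2 βs2 with hB_def
  set D : ℝ := (n : ℝ) * (3 * ‖xm‖ + 2 * r) + 2 * Real.sqrt (n:ℝ) with hD_def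
  set C : ℝ := 2 ^ ((5:ℝ)/2) * Real.sqrt n * βl1 / (α * ‖vm‖) with hC_def
  have hB0 : 0 < B := lt_of_lt_of_le hβl2 (le_max_left _ _)
  have hβ1B : βl2 ≤ B := le_max_left βl2 βs2
  have hβ2B : βs2 ≤ B := le_max_right βl2 βs2
  clear_value w c κ B D C
  have hrw : r < w := lt_of_lt_of_le hr (min_le_left _ _)
  have hr1 : r < 1 := lt_of_lt_of_le hr (min_le_right _ _)
  have hκ0 : 0 < κ := by rw [hκ_def]; linarith
  have hc0 : 0 < c := by rw [hc_def]; linarith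
  have hn2 : (2:ℝ) ≤ (n:ℝ) := by exact_mod_cast hn
  have hn0 : (0:ℝ) < (n:ℝ) := by linarith
  have hxm0 : (0:ℝ) ≤ ‖xm‖ := norm_nonneg _
  have hA0 : (0:ℝ) ≤ ‖xm‖ + 1 + r := by linarith
  have hα1 : (0:ℝ) < α + 1 := by linarith
  have hv0 : 0 < ‖vm‖ := by
    have h1 : (0:ℝ) < 2 ^ 5 * (n:ℝ) * max βl1 βl2 / α :=
      div_pos (mul_pos (mul_pos (by norm_num) hn0) (lt_of_lt_of_le hβl1 (le_max_left _ _))) hα0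
    exact lt_of_lt_of_le (Real.sqrt_pos.mpr h1) hvm
  have hw0 : 0 < w := by
    rw [hw_def]; exact div_pos hv0 (Real.rpow_pos_of_pos (by norm_num) _)
  have hvsq : 2 ^ 5 * (n:ℝ) * βl1 ≤ ‖vm‖ ^ 2 * α := by
    have h1 : 2 ^ 5 * (n:ℝ) * βl1 / α ≤ 2 ^ 5 * (n:ℝ) * max βl1 βl2 / α :=
      div_le_div_of_nonneg_right (mul_le_mul_of_nonneg_left (le_max_left _ _) (by positivity)) hα0.le
    have h2 : Real.sqrt (2 ^ 5 * (n:ℝ) * max βl1 βl2 / α) ^ 2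
        = 2 ^ 5 * (n:ℝ) * max βl1 βl2 / α := Real.sq_sqrt (by positivity)
    have h3 : Real.sqrt (2 ^ 5 * (n:ℝ) * max βl1 βl2 / α) ^ 2 ≤ ‖vm‖ ^ 2 :=
      pow_le_pow_left₀ (Real.sqrt_nonneg _) hvm 2
    rw [h2] at h3
    have h4 : 2 ^ 5 * (n:ℝ) * βl1 / α ≤ ‖vm‖ ^ 2 := le_trans h1 h3
    calc 2 ^ 5 * (n:ℝ) * βl1 = 2 ^ 5 * (n:ℝ) * βl1 / α * α := by field_simp
      _ ≤ ‖vm‖ ^ 2 * α := mul_le_mul_of_nonneg_right h4 hα0.le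
  have hCle : C ≤ ‖vm‖ / 8 := by
    rw [hC_def]
    set t : ℝ := (2:ℝ) ^ ((5:ℝ)/2) with ht_def
    clear_value t
    have ht0 : 0 < t := ht_def ▸ Real.rpow_pos_of_pos (by norm_num) _
    have htsq : t ^ 2 = 32 := by
      rw [ht_def, ← Real.rpow_natCast ((2:ℝ) ^ ((5:ℝ)/2)) 2,
        ← Real.rpow_mul (by norm_num : (0:ℝ) ≤ 2),
        show (5:ℝ)/2 * ((2:ℕ):ℝ) = ((5:ℕ):ℝ) by push_cast; norm_num,
        Real.rpow_natCast]
      norm_num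
    have hsn : Real.sqrt (n:ℝ) ^ 2 = (n:ℝ) := Real.sq_sqrt hn0.le
    have hsn0 : (0:ℝ) ≤ Real.sqrt (n:ℝ) := Real.sqrt_nonneg _
    have hts : t * Real.sqrt (n:ℝ) ≤ 4 * (n:ℝ) := by
      linarith only [sq_nonneg (t - 4 * Real.sqrt (n:ℝ)), htsq, hsn, hn2]
    rw [div_le_div_iff₀ (mul_pos hα0 hv0) (by norm_num : (0:ℝ) < 8)]
    linarith only [hvsq, mul_le_mul_of_nonneg_right hts hβl1.le]
  have h32 : (2:ℝ) ≤ 2 ^ ((3:ℝ)/2) := by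
    calc (2:ℝ) = 2 ^ (1:ℝ) := (Real.rpow_one 2).symm
      _ ≤ 2 ^ ((3:ℝ)/2) := Real.rpow_le_rpow_of_exponent_le (by norm_num) (by norm_num)
  have hw2 : w ≤ ‖vm‖ / 2 := by
    rw [hw_def]
    exact div_le_div_of_nonneg_left hv0.le (by norm_num) h32
  have hwC : w ≤ ‖vm‖ - C := by linarith [hCle, hw2]
  -- bound on f
  have hs1nn : 0 ≤ sSup ((fun t => ‖f t‖) '' Iic 0) :=
    le_trans (norm_nonneg (f 0)) (le_csSup hb1 ⟨0, by simp, rfl⟩)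
  have hs2nn : 0 ≤ sSup ((fun t => ‖f t‖ / (1 + t)) '' Ici 0) :=
    le_trans (by positivity : (0:ℝ) ≤ ‖f 0‖ / (1 + 0)) (le_csSup hb2 ⟨0, by simp, rfl⟩)
  have hfle : ∀ t : ℝ, ‖f t‖ ≤ r * (1 + max t 0) := by
    intro t
    rcases le_or_gt t 0 with ht | ht
    · have h1 : ‖f t‖ ≤ sSup ((fun t => ‖f t‖) '' Iic 0) := le_csSup hb1 ⟨t, ht, rfl⟩
      rw [max_eq_right ht, show r * (1 + 0) = r by ring]
      linarith
    · have h1 : ‖f t‖ / (1 + t) ≤ sSup ((fun t => ‖f t‖ / (1 + t)) '' Ici 0) :=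
        le_csSup hb2 ⟨t, ht.le, rfl⟩
      have h2 : ‖f t‖ / (1 + t) ≤ r := by linarith
      have h3 : (0:ℝ) < 1 + t := by linarith
      rw [max_eq_left ht.le]
      calc ‖f t‖ = ‖f t‖ / (1 + t) * (1 + t) := by field_simp
        _ ≤ r * (1 + t) := mul_le_mul_of_nonneg_right h2 h3.le
  -- growth bound
  have hzg : ∀ t : ℝ, ‖zm t - t • vm‖ ≤ C * |t| := by
    intro t
    have h := hzm.2.2.2.2 t
    simpa using h
  have hbase : ∀ τ : ℝ, 0 < c + κ * |τ| := fun τ =>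
    add_pos_of_pos_of_nonneg hc0 (mul_nonneg hκ0.le (abs_nonneg τ))
  -- lower bound on the trajectory
  have hlow : ∀ (τ s : ℝ), 0 ≤ s → s ≤ 1 →
      c + κ * |τ| ≤ 1 + ‖zm τ + s • (xm + f τ)‖ := by
    intro τ s hs0 hs1
    have hpyth : |τ| * ‖vm‖ ≤ ‖τ • vm + s • xm‖ := by
      have hinner : ⟪τ • vm, s • xm⟫ = 0 := by
        rw [real_inner_smul_left, real_inner_smul_right, hperp]; ring
      have h2 : ‖τ • vm + s • xm‖ ^ 2 = ‖τ • vm‖ ^ 2 + ‖s • xm‖ ^ 2 := by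
        rw [norm_add_sq_real, hinner]; ring
      have hsq : ‖τ • vm‖ ^ 2 ≤ ‖τ • vm + s • xm‖ ^ 2 := by
        rw [h2]; exact le_add_of_nonneg_right (sq_nonneg _)
      have h3 : ‖τ • vm‖ ≤ ‖τ • vm + s • xm‖ := by
        calc ‖τ • vm‖ = Real.sqrt (‖τ • vm‖ ^ 2) := (Real.sqrt_sq (norm_nonneg _)).symm
          _ ≤ Real.sqrt (‖τ • vm + s • xm‖ ^ 2) := Real.sqrt_le_sqrt hsq
          _ = ‖τ • vm + s • xm‖ := Real.sqrt_sq (norm_nonneg _)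
      calc |τ| * ‖vm‖ = ‖τ • vm‖ := by rw [norm_smul, Real.norm_eq_abs]
        _ ≤ _ := h3
    have hdecomp : zm τ + s • (xm + f τ) = zm τ - τ • vm + (τ • vm + s • xm) + s • f τ := by
      rw [smul_add]; abel
    have hlb : ‖τ • vm + s • xm‖ - ‖zm τ - τ • vm‖ - ‖s • f τ‖ ≤ ‖zm τ + s • (xm + f τ)‖ := by
      have e1 : τ • vm + s • xm =
          zm τ - τ • vm + (τ • vm + s • xm) + s • f τ - (zm τ - τ • vm) - s • f τ := by abel
      have h4 : ‖τ • vm + s • xm‖ ≤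
          ‖zm τ - τ • vm + (τ • vm + s • xm) + s • f τ‖ + ‖zm τ - τ • vm‖ + ‖s • f τ‖ := by
        calc ‖τ • vm + s • xm‖
            = ‖zm τ - τ • vm + (τ • vm + s • xm) + s • f τ - (zm τ - τ • vm) - s • f τ‖ := by
              rw [← e1]
          _ ≤ ‖zm τ - τ • vm + (τ • vm + s • xm) + s • f τ - (zm τ - τ • vm)‖ + ‖s • f τ‖ :=
              norm_sub_le _ _
          _ ≤ _ := by
              have h5 := norm_sub_le (zm τ - τ • vm + (τ • vm + s • xm) + s • f τ)
                (zm τ - τ • vm)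
              linarith
      rw [hdecomp]
      linarith
    have hsf : ‖s • f τ‖ ≤ r * (1 + max τ 0) := by
      rw [norm_smul, Real.norm_eq_abs, abs_of_nonneg hs0]
      calc s * ‖f τ‖ ≤ 1 * ‖f τ‖ := mul_le_mul_of_nonneg_right hs1 (norm_nonneg _)
        _ = ‖f τ‖ := one_mul _
        _ ≤ _ := hfle τ
    have hzgτ := hzg τ
    have hmax : max τ 0 ≤ |τ| := max_le (le_abs_self τ) (abs_nonneg τ)
    have h2 : w * |τ| ≤ (‖vm‖ - C) * |τ| := mul_le_mul_of_nonneg_right hwC (abs_nonneg τ)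
    have h3 : r * max τ 0 ≤ r * |τ| := mul_le_mul_of_nonneg_left hmax hr0.le
    have hck : c + κ * |τ| = 1 - r + (w - r) * |τ| := by rw [hc_def, hκ_def]
    rw [hck]
    linarith only [hpyth, hlb, hsf, hzgτ, h2, h3]
  -- decay bounds with adjusted exponent
  have hVl2' : ∀ x, ‖iteratedFDeriv ℝ 2 Vl x‖ ≤ βl2 * (1 + ‖x‖) ^ (-(α+1+1)) := by
    intro x
    have h := hVl.2.2.2 x
    rwa [show -(α+2) = -(α+1+1) by ring] at h
  have hVs2' : ∀ x, ‖gradient Vs x‖ ≤ βs2 * (1 + ‖x‖) ^ (-(α+1+1)) := by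
    intro x
    have h := hVs.2.2.1 x
    rwa [show -(α+2) = -(α+1+1) by ring] at h
  -- the integrand and its pointwise bound
  set H : ℝ → Euc n := fun τ => F (zm τ + xm + f τ) - Fl (zm τ) with hH_def
  set G : ℝ → ℝ :=
    fun τ => B * ((‖xm‖ + 1 + r) + r * max τ 0) * (c + κ * |τ|) ^ (-(α+1+1)) with hG_def
  have hpt : ∀ τ : ℝ, ‖H τ‖ ≤ G τ := by
    intro τ
    simp only [hH_def, hG_def]
    have hyz : zm τ + xm + f τ - zm τ = xm + f τ := by abel
    have hexp0 : -(α+1+1) ≤ (0:ℝ) := by linarith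
    have hK : ∀ u ∈ segment ℝ (zm τ) (zm τ + xm + f τ),
        ‖iteratedFDeriv ℝ 2 Vl u‖ ≤ βl2 * (c + κ * |τ|) ^ (-(α+1+1)) := by
      intro u hu
      rw [segment_eq_image'] at hu
      obtain ⟨θ, hθ, rfl⟩ := hu
      rw [hyz]
      refine le_trans (hVl2' _) ?_
      exact mul_le_mul_of_nonneg_left
        (Real.rpow_le_rpow_of_nonpos (hbase τ) (hlow τ θ hθ.1 hθ.2) hexp0) hβl2.le
    have h1 : ‖Fl (zm τ + xm + f τ) - Fl (zm τ)‖ ≤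
        βl2 * (c + κ * |τ|) ^ (-(α+1+1)) * ‖xm + f τ‖ := by
      have hg := grad_lip hVl.1 hK
      rw [hFl, hFl]
      calc ‖-gradient Vl (zm τ + xm + f τ) - -gradient Vl (zm τ)‖
          = ‖gradient Vl (zm τ + xm + f τ) - gradient Vl (zm τ)‖ := by
            rw [show -gradient Vl (zm τ + xm + f τ) - -gradient Vl (zm τ) =
              -(gradient Vl (zm τ + xm + f τ) - gradient Vl (zm τ)) by abel, norm_neg]
        _ ≤ βl2 * (c + κ * |τ|) ^ (-(α+1+1)) * ‖zm τ + xm + f τ - zm τ‖ := hg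
        _ = _ := by rw [hyz]
    have h2 : ‖Fs (zm τ + xm + f τ)‖ ≤ βs2 * (c + κ * |τ|) ^ (-(α+1+1)) := by
      rw [hFs, norm_neg]
      refine le_trans (hVs2' _) ?_
      have hl := hlow τ 1 zero_le_one le_rfl
      rw [one_smul, show zm τ + (xm + f τ) = zm τ + xm + f τ from (add_assoc _ _ _).symm] at hl
      exact mul_le_mul_of_nonneg_left
        (Real.rpow_le_rpow_of_nonpos (hbase τ) hl hexp0) hβs2.le
    have hsplit : F (zm τ + xm + f τ) - Fl (zm τ) =
        Fl (zm τ + xm + f τ) - Fl (zm τ) + Fs (zm τ + xm + f τ) := by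
      rw [hF]; abel
    have hφ : (0:ℝ) ≤ (c + κ * |τ|) ^ (-(α+1+1)) := Real.rpow_nonneg (hbase τ).le _
    have hxf : ‖xm + f τ‖ ≤ ‖xm‖ + r * (1 + max τ 0) :=
      le_trans (norm_add_le _ _) (by linarith [hfle τ])
    have hm0 : (0:ℝ) ≤ max τ 0 := le_max_right _ _
    calc ‖F (zm τ + xm + f τ) - Fl (zm τ)‖
        ≤ ‖Fl (zm τ + xm + f τ) - Fl (zm τ)‖ + ‖Fs (zm τ + xm + f τ)‖ := by
          rw [hsplit]; exact norm_add_le _ _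
      _ ≤ βl2 * (c + κ * |τ|) ^ (-(α+1+1)) * ‖xm + f τ‖
            + βs2 * (c + κ * |τ|) ^ (-(α+1+1)) := add_le_add h1 h2
      _ ≤ B * ((‖xm‖ + 1 + r) + r * max τ 0) * (c + κ * |τ|) ^ (-(α+1+1)) := by
          have hp1 : βl2 * ‖xm + f τ‖ ≤ B * (‖xm‖ + r * (1 + max τ 0)) :=
            mul_le_mul hβ1B hxf (norm_nonneg _) (le_trans hβl2.le hβ1B)
          have hint1 := mul_le_mul_of_nonneg_right hp1 hφ
          have hint2 := mul_le_mul_of_nonneg_right hβ2B hφ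
          linarith only [hint1, hint2]
  -- continuity
  have hgVl : Continuous (gradient Vl) := by
    have h1 : Continuous (fderiv ℝ Vl) := (hVl.1.fderiv_right (m := 1) (by norm_num)).continuous
    exact ((InnerProductSpace.toDual ℝ (Euc n)).symm.continuous).comp h1
  have hgVs : Continuous (gradient Vs) := by
    have h1 : Continuous (fderiv ℝ Vs) := (hVs.1.fderiv_right (m := 1) (by norm_num)).continuous
    exact ((InnerProductSpace.toDual ℝ (Euc n)).symm.continuous).comp h1
  have hFlc : Continuous Fl := by
    rw [show Fl = (fun y => -gradient Vl y) from funext hFl]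
    exact hgVl.neg
  have hFsc : Continuous Fs := by
    rw [show Fs = (fun y => -gradient Vs y) from funext hFs]
    exact hgVs.neg
  have hFc : Continuous F := by
    rw [show F = (fun y => Fl y + Fs y) from funext hF]
    exact hFlc.add hFsc
  have hzc : Continuous zm := hzm.1.continuous
  have hHc : Continuous H := by
    rw [hH_def]
    exact (hFc.comp ((hzc.add continuous_const).add hfc)).sub (hFlc.comp hzc)
  have hGc : Continuous G := by
    rw [hG_def]
    apply Continuous.mul
    · exact continuous_const.mul
        (continuous_const.add (continuous_const.mul (continuous_id.max continuous_const)))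
    · exact (continuous_const.add (continuous_const.mul continuous_abs)).rpow_const
        (fun x => Or.inl (hbase x).ne')
  have hG0 : ∀ τ, 0 ≤ G τ := by
    intro τ
    have hm0 : (0:ℝ) ≤ max τ 0 := le_max_right _ _
    have hφ : (0:ℝ) ≤ (c + κ * |τ|) ^ (-(α+1+1)) := Real.rpow_nonneg (hbase τ).le _
    exact mul_nonneg (mul_nonneg hB0.le (add_nonneg hA0 (mul_nonneg hr0.le hm0))) hφ
  -- integrability of G
  have k1 : ∀ σ : ℝ, σ ≤ 0 →
      IntegrableOn (fun τ : ℝ => (c - κ * τ) ^ (-(α+1+1))) (Iic σ) ∧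
        ∫ τ in Iic σ, (c - κ * τ) ^ (-(α+1+1)) = (c - κ * σ) ^ (-(α+1)) / (κ * (α+1)) := by
    intro σ hσ
    have hpos : 0 < c - κ * σ := by
      linarith only [mul_nonneg hκ0.le (neg_nonneg.mpr hσ), hc0]
    exact key_Iic σ hpos hκ0 hα1
  obtain ⟨k2i, k2v⟩ := key_Ioi (c := c) (κ := κ) (p := α + 1) 0 (by simpa using hc0) hκ0 hα1
  rw [mul_zero, add_zero] at k2v
  obtain ⟨k3i, k3v⟩ := key_Ioi (c := c) (κ := κ) (p := α) 0 (by simpa using hc0) hκ0 hα0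
  rw [mul_zero, add_zero] at k3v
  have hGon : ∀ τ : ℝ, τ ≤ 0 → G τ = B * (‖xm‖ + 1 + r) * (c - κ * τ) ^ (-(α+1+1)) := by
    intro τ ht
    rw [hG_def]
    simp only [max_eq_right ht, mul_zero, add_zero, abs_of_nonpos ht, mul_neg,
      ← sub_eq_add_neg]
  have hGIic0 : IntegrableOn G (Iic 0) :=
    MeasureTheory.IntegrableOn.congr_fun ((k1 0 le_rfl).1.const_mul (B * (‖xm‖ + 1 + r)))
      (fun τ ht => (hGon τ ht).symm) measurableSet_Iic
  have hGint : ∀ σ : ℝ, IntegrableOn G (Iic σ) := by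
    intro σ
    rcases le_or_gt σ 0 with hσ | hσ
    · exact hGIic0.mono_set (Iic_subset_Iic.mpr hσ)
    · rw [← Iic_union_Ioc_eq_Iic hσ.le]
      exact hGIic0.union hGc.integrableOn_Ioc
  -- bound for the inner integral of G over positive σ
  have hGleb : ∀ τ ∈ Ioi (0:ℝ), G τ ≤ B * (‖xm‖ + 1 + r) * (c + κ * τ) ^ (-(α+1+1)) +
      B * (r / κ) * (c + κ * τ) ^ (-(α+1)) := by
    intro τ hτ
    have hτ0 : (0:ℝ) < τ := hτ
    have hpos : 0 < c + κ * τ := by linarith only [mul_pos hκ0 hτ0, hc0]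
    rw [hG_def]
    simp only [max_eq_left hτ0.le, abs_of_pos hτ0]
    have hψ : (0:ℝ) ≤ (c + κ * τ) ^ (-(α+1+1)) := Real.rpow_nonneg hpos.le _
    have hxp : (c + κ * τ) * (c + κ * τ) ^ (-(α+1+1)) = (c + κ * τ) ^ (-(α+1)) := by
      rw [show (-(α+1) : ℝ) = 1 + -(α+1+1) by ring, Real.rpow_add hpos, Real.rpow_one]
    have ht1 : τ * (c + κ * τ) ^ (-(α+1+1)) ≤ 1/κ * (c + κ * τ) ^ (-(α+1)) := by
      rw [← hxp]
      have hκτ : τ ≤ (c + κ * τ) / κ := by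
        rw [le_div_iff₀ hκ0]; linarith only [hc0]
      calc τ * (c + κ * τ) ^ (-(α+1+1))
          ≤ (c + κ * τ) / κ * (c + κ * τ) ^ (-(α+1+1)) :=
            mul_le_mul_of_nonneg_right hκτ hψ
        _ = 1/κ * ((c + κ * τ) * (c + κ * τ) ^ (-(α+1+1))) := by ring
    have hint := mul_le_mul_of_nonneg_left ht1 (mul_nonneg hB0.le hr0.le)
    calc B * (‖xm‖ + 1 + r + r * τ) * (c + κ * τ) ^ (-(α+1+1))
        = B * (‖xm‖ + 1 + r) * (c + κ * τ) ^ (-(α+1+1))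
            + B * r * (τ * (c + κ * τ) ^ (-(α+1+1))) := by ring
      _ ≤ B * (‖xm‖ + 1 + r) * (c + κ * τ) ^ (-(α+1+1))
            + B * r * (1/κ * (c + κ * τ) ^ (-(α+1))) := add_le_add_right hint _
      _ = B * (‖xm‖ + 1 + r) * (c + κ * τ) ^ (-(α+1+1))
            + B * (r / κ) * (c + κ * τ) ^ (-(α+1)) := by ring
  have hGbint : IntegrableOn (fun τ : ℝ => B * (‖xm‖ + 1 + r) * (c + κ * τ) ^ (-(α+1+1)) +
      B * (r / κ) * (c + κ * τ) ^ (-(α+1))) (Ioi 0) :=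
    (k2i.const_mul _).add (k3i.const_mul _)
  have hGIoi : IntegrableOn G (Ioi 0) := by
    refine Integrable.mono' hGbint hGc.aestronglyMeasurable ?_
    rw [ae_restrict_iff' measurableSet_Ioi]
    refine Filter.Eventually.of_forall (fun τ hτ => ?_)
    rw [Real.norm_eq_abs, abs_of_nonneg (hG0 τ)]
    exact hGleb τ hτ
  have hGIocle : ∀ σ : ℝ, 0 < σ → ∫ τ in Ioc 0 σ, G τ ≤
      B * (‖xm‖ + 1 + r) * (c ^ (-(α+1)) / (κ * (α+1))) + B * (r / κ) * (c ^ (-α) / (κ * α)) := by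
    intro σ hσ
    calc ∫ τ in Ioc 0 σ, G τ ≤ ∫ τ in Ioi 0, G τ :=
          setIntegral_mono_set hGIoi (Filter.Eventually.of_forall hG0)
            (HasSubset.Subset.eventuallyLE Ioc_subset_Ioi_self)
      _ ≤ ∫ τ in Ioi 0, (B * (‖xm‖ + 1 + r) * (c + κ * τ) ^ (-(α+1+1)) +
            B * (r / κ) * (c + κ * τ) ^ (-(α+1))) :=
          setIntegral_mono_on hGIoi hGbint measurableSet_Ioi hGleb
      _ = B * (‖xm‖ + 1 + r) * (c ^ (-(α+1)) / (κ * (α+1)))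
            + B * (r / κ) * (c ^ (-α) / (κ * α)) := by
          rw [integral_add (k2i.const_mul _) (k3i.const_mul _), integral_const_mul,
            integral_const_mul, k2v, k3v]
  set U0 : ℝ := B * (‖xm‖ + 1 + r) * (c ^ (-(α+1)) / (κ * (α+1))) with hU0_def
  set V0 : ℝ := B * (r / κ) * (c ^ (-α) / (κ * α)) with hV0_def
  have hU0nn : 0 ≤ U0 :=
    mul_nonneg (mul_nonneg hB0.le hA0)
      (div_nonneg (Real.rpow_nonneg hc0.le _) (mul_nonneg hκ0.le hα1.le))
  have hV0nn : 0 ≤ V0 :=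
    mul_nonneg (mul_nonneg hB0.le (div_nonneg hr0.le hκ0.le))
      (div_nonneg (Real.rpow_nonneg hc0.le _) (mul_nonneg hκ0.le hα0.le))
  clear_value U0 V0
  have hGval1 : ∀ σ : ℝ, σ ≤ 0 → ∫ τ in Iic σ, G τ =
      B * (‖xm‖ + 1 + r) * ((c - κ * σ) ^ (-(α+1)) / (κ * (α+1))) := by
    intro σ hσ
    rw [setIntegral_congr_fun measurableSet_Iic
      (fun τ (ht : τ ∈ Iic σ) => hGon τ (le_trans ht hσ)), integral_const_mul, (k1 σ hσ).2]
  have hGbnd : ∀ σ : ℝ, ∫ τ in Iic σ, G τ ≤ U0 + (U0 + V0) := by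
    intro σ
    rcases le_or_gt σ 0 with hσ | hσ
    · rw [hGval1 σ hσ]
      have hle1 : (c - κ * σ) ^ (-(α+1)) ≤ c ^ (-(α+1)) :=
        Real.rpow_le_rpow_of_nonpos hc0
          (by linarith only [mul_nonneg hκ0.le (neg_nonneg.mpr hσ)]) (by linarith only [hα1])
      have h1 : B * (‖xm‖ + 1 + r) * ((c - κ * σ) ^ (-(α+1)) / (κ * (α+1))) ≤ U0 := by
        rw [hU0_def]
        exact mul_le_mul_of_nonneg_left
          (div_le_div_of_nonneg_right hle1 (mul_nonneg hκ0.le hα1.le))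
          (mul_nonneg hB0.le hA0)
      linarith only [h1, hU0nn, hV0nn]
    · rw [← Iic_union_Ioc_eq_Iic hσ.le,
        setIntegral_union (Iic_disjoint_Ioc le_rfl) measurableSet_Ioc hGIic0
          hGc.integrableOn_Ioc]
      have h1 : ∫ τ in Iic 0, G τ ≤ U0 := by
        rw [hGval1 0 le_rfl]
        simp only [mul_zero, sub_zero]
        rw [← hU0_def]
      have h2 := hGIocle σ hσ
      linarith only [h1, h2]
  -- the inner integral
  have hinner : ∀ σ : ℝ, ‖∫ τ in Iic σ, H τ‖ ≤ ∫ τ in Iic σ, G τ := fun σ =>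
    norm_integral_le_of_norm_le (hGint σ) (Filter.Eventually.of_forall hpt)
  have hHint : ∀ σ : ℝ, IntegrableOn H (Iic σ) := fun σ =>
    Integrable.mono' (hGint σ) hHc.aestronglyMeasurable (Filter.Eventually.of_forall hpt)
  -- continuity of the primitive
  have hHiv : ∀ a b : ℝ, IntervalIntegrable H volume a b := fun a b =>
    hHc.intervalIntegrable a b
  have hPP : ∀ σ : ℝ, (∫ τ in Iic σ, H τ) = (∫ τ in Iic 0, H τ) + ∫ x in (0:ℝ)..σ, H x := by
    intro σ
    rcases le_total 0 σ with h | h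
    · rw [intervalIntegral.integral_of_le h, ← Iic_union_Ioc_eq_Iic h,
        setIntegral_union (Iic_disjoint_Ioc le_rfl) measurableSet_Ioc (hHint 0)
          hHc.integrableOn_Ioc]
    · rw [intervalIntegral.integral_of_ge h]
      have h1 : (∫ τ in Iic 0, H τ) = (∫ τ in Iic σ, H τ) + ∫ τ in Ioc σ 0, H τ := by
        rw [← setIntegral_union (Iic_disjoint_Ioc le_rfl) measurableSet_Ioc (hHint σ)
          hHc.integrableOn_Ioc, Iic_union_Ioc_eq_Iic h]
      rw [h1]; abel
  have hPc : Continuous (fun σ : ℝ => ∫ τ in Iic σ, H τ) := by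
    have he : (fun σ : ℝ => ∫ τ in Iic σ, H τ) =
        fun σ => (∫ τ in Iic 0, H τ) + ∫ x in (0:ℝ)..σ, H x := funext hPP
    rw [he]
    exact continuous_const.add (intervalIntegral.continuous_primitive hHiv 0)
  -- the outer integral, negative times
  have hAop : ∀ t : ℝ, Aop Fl F zm xm f t = ∫ σ in Iic t, ∫ τ in Iic σ, H τ := fun t => rfl
  set U1 : ℝ := B * (‖xm‖ + 1 + r) / (κ * (α+1)) * (c ^ (-α) / (κ * α)) with hU1_def
  have hcoefnn : 0 ≤ B * (‖xm‖ + 1 + r) / (κ * (α+1)) :=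
    div_nonneg (mul_nonneg hB0.le hA0) (mul_nonneg hκ0.le hα1.le)
  have hU1nn : 0 ≤ U1 :=
    mul_nonneg hcoefnn (div_nonneg (Real.rpow_nonneg hc0.le _) (mul_nonneg hκ0.le hα0.le))
  clear_value U1
  have hS1 : ∀ t : ℝ, t ≤ 0 → ‖Aop Fl F zm xm f t‖ ≤ U1 := by
    intro t ht
    rw [hAop t]
    have hct : 0 < c - κ * t := by
      linarith only [mul_nonneg hκ0.le (neg_nonneg.mpr ht), hc0]
    obtain ⟨kti, ktv⟩ := key_Iic (c := c) (κ := κ) (p := α) t hct hκ0 hα0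
    have hdom := kti.const_mul (B * (‖xm‖ + 1 + r) / (κ * (α+1)))
    have hbound : ∀ᵐ σ ∂(volume.restrict (Iic t)), ‖∫ τ in Iic σ, H τ‖ ≤
        B * (‖xm‖ + 1 + r) / (κ * (α+1)) * (c - κ * σ) ^ (-(α+1)) := by
      rw [ae_restrict_iff' measurableSet_Iic]
      refine Filter.Eventually.of_forall (fun σ hσ => ?_)
      refine le_trans (hinner σ) ?_
      rw [hGval1 σ (le_trans hσ ht)]
      exact le_of_eq (by ring)
    refine le_trans (norm_integral_le_of_norm_le hdom hbound) ?_
    rw [integral_const_mul, ktv, hU1_def]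
    have hrp : (c - κ * t) ^ (-α) ≤ c ^ (-α) :=
      Real.rpow_le_rpow_of_nonpos hc0
        (by linarith only [mul_nonneg hκ0.le (neg_nonneg.mpr ht)]) (by linarith only [hα0])
    exact mul_le_mul_of_nonneg_left
      (div_le_div_of_nonneg_right hrp (mul_nonneg hκ0.le hα0.le)) hcoefnn
  -- the outer integral, positive times
  set B2 : ℝ := U0 + (U0 + V0) with hB2_def
  have hB2nn : 0 ≤ B2 := by
    rw [hB2_def]; linarith only [hU0nn, hV0nn]
  clear_value B2
  have hPIic0 : IntegrableOn (fun σ : ℝ => ∫ τ in Iic σ, H τ) (Iic 0) := by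
    have hct0 : 0 < c - κ * 0 := by simpa using hc0
    have hdom := ((key_Iic (c := c) (κ := κ) (p := α) 0 hct0 hκ0 hα0).1).const_mul
      (B * (‖xm‖ + 1 + r) / (κ * (α+1)))
    refine Integrable.mono' hdom hPc.aestronglyMeasurable ?_
    rw [ae_restrict_iff' measurableSet_Iic]
    refine Filter.Eventually.of_forall (fun σ hσ => ?_)
    refine le_trans (hinner σ) ?_
    rw [hGval1 σ hσ]
    exact le_of_eq (by ring)
  have hS2 : ∀ t : ℝ, 0 ≤ t → ‖Aop Fl F zm xm f t‖ ≤ U1 + t * B2 := by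
    intro t ht
    rcases eq_or_lt_of_le ht with h | h
    · rw [← h]
      simpa using hS1 0 le_rfl
    · rw [hAop t, ← Iic_union_Ioc_eq_Iic ht,
        setIntegral_union (Iic_disjoint_Ioc le_rfl) measurableSet_Ioc hPIic0
          hPc.integrableOn_Ioc]
      have h1 : ‖∫ σ in Iic 0, ∫ τ in Iic σ, H τ‖ ≤ U1 := by
        have h1' := hS1 0 le_rfl
        rwa [hAop 0] at h1'
      have h2 : ‖∫ σ in Ioc 0 t, ∫ τ in Iic σ, H τ‖ ≤ t * B2 := by
        have hconst : IntegrableOn (fun _ : ℝ => B2) (Ioc 0 t) := by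
          refine integrableOn_const ?_
          rw [Real.volume_Ioc]
          exact ENNReal.ofReal_ne_top
        have hb : ∀ᵐ σ ∂(volume.restrict (Ioc 0 t)), ‖∫ τ in Iic σ, H τ‖ ≤ B2 :=
          Filter.Eventually.of_forall (fun σ => le_trans (hinner σ) (hGbnd σ))
        calc ‖∫ σ in Ioc 0 t, ∫ τ in Iic σ, H τ‖ ≤ ∫ _σ in Ioc 0 t, B2 :=
              norm_integral_le_of_norm_le hconst hb
          _ = t * B2 := by
              rw [setIntegral_const, Real.volume_real_Ioc,
                max_eq_left (by linarith), smul_eq_mul, sub_zero]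
      calc ‖(∫ σ in Iic 0, ∫ τ in Iic σ, H τ) + ∫ σ in Ioc 0 t, ∫ τ in Iic σ, H τ‖
          ≤ ‖∫ σ in Iic 0, ∫ τ in Iic σ, H τ‖ + ‖∫ σ in Ioc 0 t, ∫ τ in Iic σ, H τ‖ :=
            norm_add_le _ _
        _ ≤ U1 + t * B2 := add_le_add h1 h2
  -- assembling the Mnorm bound
  have hMn : Mnorm (Aop Fl F zm xm f) =
      sSup ((fun t => ‖Aop Fl F zm xm f t‖) '' Iic 0) +
        sSup ((fun t => ‖Aop Fl F zm xm f t‖ / (1 + t)) '' Ici 0) := rfl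
  rw [hMn]
  have hbound1 : sSup ((fun t => ‖Aop Fl F zm xm f t‖) '' Iic 0) ≤ U1 := by
    apply Real.sSup_le ?_ hU1nn
    rintro x ⟨t, ht, rfl⟩
    exact hS1 t ht
  have hbound2 : sSup ((fun t => ‖Aop Fl F zm xm f t‖ / (1 + t)) '' Ici 0) ≤ U1 + B2 := by
    apply Real.sSup_le ?_ (by linarith only [hU1nn, hB2nn])
    rintro x ⟨t, ht, rfl⟩
    have ht0 : (0:ℝ) ≤ t := ht
    have hden : (0:ℝ) < 1 + t := by linarith
    rw [div_le_iff₀ hden]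
    have h := hS2 t ht0
    linarith only [h, mul_nonneg ht0 hU1nn, hB2nn]
  refine le_trans (add_le_add hbound1 hbound2) ?_
  -- final arithmetic
  have hsn1 : (1:ℝ) ≤ Real.sqrt (n:ℝ) :=
    Real.one_le_sqrt.mpr (by exact_mod_cast le_trans (by norm_num : (1:ℕ) ≤ 2) hn)
  have hDge : 6 * ‖xm‖ + 4 * r + 2 ≤ D := by
    rw [hD_def]
    have h1 : 2 * (3 * ‖xm‖ + 2 * r) ≤ (n:ℝ) * (3 * ‖xm‖ + 2 * r) :=
      mul_le_mul_of_nonneg_right hn2 (by linarith only [hxm0, hr0])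
    linarith only [h1, hsn1]
  have hkey1 : 2 * (‖xm‖ + 1 + r) ≤ D := by linarith only [hDge, hxm0, hr0, hr1]
  have hkey2 : 2 * (‖xm‖ + 1 + r) / (α+1) + r ≤ 2 * D := by
    have h1 : 2 * (‖xm‖ + 1 + r) / (α+1) ≤ 2 * (‖xm‖ + 1 + r) :=
      div_le_self (by linarith only [hxm0, hr0]) (by linarith only [hα0])
    have hrD : r ≤ D := by linarith only [hDge, hxm0, hr0, hr1]
    linarith only [h1, hrD, hkey1]
  have hca : 0 < c ^ α := Real.rpow_pos_of_pos hc0 α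
  have hcn : c ^ (-α) = (c ^ α)⁻¹ := Real.rpow_neg hc0.le α
  have hcn1 : c ^ (-(α+1)) = (c ^ α * c)⁻¹ := by
    rw [Real.rpow_neg hc0.le, Real.rpow_add hc0, Real.rpow_one]
  calc U1 + (U1 + B2)
      = B * (2 * (‖xm‖ + 1 + r) / (α+1) + r) / (κ * κ * α * c ^ α) +
        B * (2 * (‖xm‖ + 1 + r)) / (κ * (α+1) * c ^ α * c) := by
        rw [hU1_def, hB2_def, hU0_def, hV0_def, hcn, hcn1]
        field_simp
        ring
    _ ≤ B * (2 * D) / (κ * κ * α * c ^ α) + B * D / (κ * (α+1) * c ^ α * c) := by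
        have d1 : (0:ℝ) ≤ κ * κ * α * c ^ α :=
          le_of_lt (mul_pos (mul_pos (mul_pos hκ0 hκ0) hα0) hca)
        have d2 : (0:ℝ) ≤ κ * (α+1) * c ^ α * c :=
          le_of_lt (mul_pos (mul_pos (mul_pos hκ0 hα1) hca) hc0)
        exact add_le_add
          (div_le_div_of_nonneg_right (mul_le_mul_of_nonneg_left hkey2 hB0.le) d1)
          (div_le_div_of_nonneg_right (mul_le_mul_of_nonneg_left hkey1 hB0.le) d2)
    _ = B * D / (κ * c ^ α) * (2 / (α * κ) + 1 / ((α + 1) * c)) := by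
        field_simp

end Paper
end
end

section
/- Let v_−, x_− ∈ ℝⁿ with v_−·x_− = 0 and |v_−| ≥ μ, let 0 < r < min(|v_−|/2^{3/2}, 1), and let y_− ∈ M_r satisfy A(y_−) = y_−. Then, with a_sc(v_−,x_−) := ∫_{−∞}^∞ F(z_−(v_−,τ)+x_−+y_−(τ)) dτ, one has |a_sc(v_−,x_−)| ≤ (2√n / ((|v_−|/(2√2) − r)(1 + |x_−|/√2 − r)^α)) · (β^l_1/α + β₂/((α+1)(1 + |x_−|/√2 − r))). -/
open MeasureTheory Real Filter Set Topology RealInnerProductSpace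

noncomputable section

namespace Paper

variable {n : ℕ}

lemma int_aux {d v p : ℝ} (hd : 0 < d) (hv : 0 < v) (hp : p < -1) :
    IntegrableOn (fun x : ℝ => (d + v * x) ^ p) (Ioi 0) ∧
      ∫ x in Ioi (0:ℝ), (d + v * x) ^ p = d ^ (p + 1) / (-(p + 1) * v) := by
  have hp1 : p + 1 < 0 := by linarith
  have hvp : v * (p + 1) ≠ 0 := mul_ne_zero hv.ne' hp1.ne
  set g : ℝ → ℝ := fun x => (d + v * x) ^ (p + 1) / (v * (p + 1)) with hg
  have hderiv : ∀ x ∈ Ici (0:ℝ), HasDerivAt g ((d + v * x) ^ p) x := by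
    intro x hx
    have hxx : (0:ℝ) ≤ x := hx
    have hpos : 0 < d + v * x := by nlinarith
    have h1 : HasDerivAt (fun x : ℝ => d + v * x) v x := by
      simpa using ((hasDerivAt_id x).const_mul v).const_add d
    have h2 := (Real.hasDerivAt_rpow_const (x := d + v * x) (p := p + 1)
      (Or.inl hpos.ne')).comp x h1
    have h3 := h2.div_const (v * (p + 1))
    refine h3.congr_deriv ?_
    rw [show p + 1 - 1 = p by ring]
    field_simp [hp1.ne]
  have hnn : ∀ x ∈ Ioi (0:ℝ), 0 ≤ (d + v * x) ^ p := by
    intro x hx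
    have : (0:ℝ) < x := hx
    exact Real.rpow_nonneg (by nlinarith) _
  have htend : Tendsto g atTop (𝓝 (0 / (v * (p + 1)))) := by
    apply Tendsto.div_const
    have h4 : Tendsto (fun x : ℝ => d + v * x) atTop atTop :=
      tendsto_atTop_add_const_left _ d (tendsto_id.const_mul_atTop hv)
    have h5 := (tendsto_rpow_neg_atTop (y := -(p+1)) (by linarith)).comp h4
    simpa [Function.comp_def, neg_neg] using h5
  refine ⟨integrableOn_Ioi_deriv_of_nonneg' hderiv hnn htend, ?_⟩
  rw [integral_Ioi_of_hasDerivAt_of_nonneg' hderiv hnn htend]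
  have : g 0 = d ^ (p + 1) / (v * (p + 1)) := by simp [hg]
  rw [this, zero_div, zero_sub, ← div_neg]
  congr 1
  ring

lemma integrable_abs_aux {f : ℝ → ℝ} (hf : IntegrableOn (fun x => f |x|) (Ioi 0)) :
    Integrable fun x : ℝ => f |x| := by
  have int_Iic : IntegrableOn (fun x ↦ f |x|) (Iic 0) := by
    rw [← Measure.map_neg_eq_self (volume : Measure ℝ)]
    have m : MeasurableEmbedding fun x : ℝ => -x := (Homeomorph.neg ℝ).measurableEmbedding
    rw [m.integrableOn_map_iff]
    simp_rw [Function.comp_def, abs_neg, neg_preimage, neg_Iic, neg_zero]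
    exact Iff.mpr integrableOn_Ici_iff_integrableOn_Ioi hf
  rw [← integrableOn_univ, ← Iic_union_Ioi (a := (0:ℝ))]
  exact int_Iic.union hf

lemma abs_int {d v p : ℝ} (hd : 0 < d) (hv : 0 < v) (hp : p < -1) :
    Integrable (fun τ : ℝ => (d + v * |τ|) ^ p) ∧
      ∫ τ : ℝ, (d + v * |τ|) ^ p = 2 * (d ^ (p + 1) / (-(p + 1) * v)) := by
  obtain ⟨hint, hval⟩ := int_aux hd hv hp
  have hio : IntegrableOn (fun x : ℝ => (d + v * |x|) ^ p) (Ioi 0) := by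
    refine hint.congr_fun (fun x hx => ?_) measurableSet_Ioi
    rw [abs_of_pos hx]
  refine ⟨integrable_abs_aux (f := fun x => (d + v * x) ^ p) hio, ?_⟩
  rw [integral_comp_abs (f := fun x => (d + v * x) ^ p), hval]

lemma sqrt2_bound {a b N : ℝ} (ha : 0 ≤ a) (hb : 0 ≤ b) (hN : 0 ≤ N)
    (h : N ^ 2 = a ^ 2 + b ^ 2) : a + b ≤ Real.sqrt 2 * N := by
  have e : (Real.sqrt 2 * N) ^ 2 = 2 * N ^ 2 := by
    rw [mul_pow, Real.sq_sqrt (by norm_num : (0:ℝ) ≤ 2)]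
  have key : (a + b) ^ 2 ≤ (Real.sqrt 2 * N) ^ 2 := by
    rw [e, h]
    nlinarith [sq_nonneg (a - b)]
  calc a + b = Real.sqrt ((a + b) ^ 2) := (Real.sqrt_sq (by positivity)).symm
    _ ≤ Real.sqrt ((Real.sqrt 2 * N) ^ 2) := Real.sqrt_le_sqrt key
    _ = Real.sqrt 2 * N := Real.sqrt_sq (by positivity)

set_option maxHeartbeats 1000000 in
theorem statement_10
    (n : ℕ) (hn : 2 ≤ n) (α : ℝ) (hα0 : 0 < α) (hα1 : α ≤ 1)
    (Vl Vs : Euc n → ℝ) (βl0 βl1 βl2 βs1 βs2 βs3 : ℝ)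
    (hβl0 : 0 < βl0) (hβl1 : 0 < βl1) (hβl2 : 0 < βl2)
    (hβs1 : 0 < βs1) (hβs2 : 0 < βs2) (hβs3 : 0 < βs3)
    (hVl : LongRange α βl0 βl1 βl2 Vl) (hVs : ShortRange α βs1 βs2 βs3 Vs)
    (Fl Fs F : Euc n → Euc n)
    (hFl : ∀ y, Fl y = -gradient Vl y) (hFs : ∀ y, Fs y = -gradient Vs y)
    (hF : ∀ y, F y = Fl y + Fs y)
    (vm xm : Euc n) (hperp : ⟪vm, xm⟫ = 0) (hvm : Real.sqrt (2 ^ 5 * (n : ℝ) * max βl1 βl2 / α) ≤ ‖vm‖)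
    (zm : ℝ → Euc n) (hzm : IsFreeSol Fl 0 vm atBot (2 ^ ((5:ℝ)/2) * Real.sqrt n * βl1 / (α * ‖vm‖)) zm)
    (r : ℝ) (hr0 : 0 < r) (hr : r < min (‖vm‖ / 2 ^ ((3:ℝ)/2)) 1)
    (ym : ℝ → Euc n) (hym : MemM r ym) (hfix : Aop Fl F zm xm ym = ym)
 :
    ‖∫ τ : ℝ, F (zm τ + xm + ym τ)‖ ≤
      2 * Real.sqrt n / ((‖vm‖ / (2 * Real.sqrt 2) - r) * (1 + ‖xm‖ / Real.sqrt 2 - r) ^ α) *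
        (βl1 / α + (max βl2 βs2) / ((α + 1) * (1 + ‖xm‖ / Real.sqrt 2 - r))) := by
  -- basic numeric facts
  have hs2pos : (0:ℝ) < Real.sqrt 2 := Real.sqrt_pos.mpr (by norm_num)
  have hs2sq : Real.sqrt 2 * Real.sqrt 2 = 2 := Real.mul_self_sqrt (by norm_num)
  have hnR : (2:ℝ) ≤ (n:ℝ) := by exact_mod_cast hn
  have hsn1 : (1:ℝ) ≤ Real.sqrt n := by
    rw [show (1:ℝ) = Real.sqrt 1 from (Real.sqrt_one).symm]
    exact Real.sqrt_le_sqrt (by linarith)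
  have hsnn : Real.sqrt n ≤ (n:ℝ) := by
    have h := Real.sq_sqrt (by positivity : (0:ℝ) ≤ (n:ℝ))
    have h2 := mul_nonneg (sub_nonneg.mpr hsn1) (Real.sqrt_nonneg (n:ℝ))
    nlinarith [h, h2]
  have h2sq : (2:ℝ) ^ (2:ℝ) = 4 := by
    rw [show (2:ℝ) = ((2:ℕ):ℝ) by norm_num]
    rw [Real.rpow_natCast]; norm_num
  have h52 : (2:ℝ) ^ ((5:ℝ)/2) = 4 * Real.sqrt 2 := by
    rw [show (5:ℝ)/2 = 2 + 1/2 by norm_num, Real.rpow_add (by norm_num : (0:ℝ) < 2),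
      ← Real.sqrt_eq_rpow, h2sq]
  have h32 : (2:ℝ) ^ ((3:ℝ)/2) = 2 * Real.sqrt 2 := by
    rw [show (3:ℝ)/2 = 1 + 1/2 by norm_num, Real.rpow_add (by norm_num : (0:ℝ) < 2),
      ← Real.sqrt_eq_rpow, Real.rpow_one]
  -- positivity of ‖vm‖
  have hXpos : (0:ℝ) < 2 ^ 5 * (n : ℝ) * max βl1 βl2 / α := by
    have : 0 < max βl1 βl2 := lt_max_of_lt_left hβl1
    have h0n : (0:ℝ) < n := by linarith
    positivity
  have hvmpos : (0:ℝ) < ‖vm‖ := lt_of_lt_of_le (Real.sqrt_pos.mpr hXpos) hvm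
  have hvm2 : 2 ^ 5 * (n : ℝ) * max βl1 βl2 / α ≤ ‖vm‖ ^ 2 := by
    calc 2 ^ 5 * (n : ℝ) * max βl1 βl2 / α
        = Real.sqrt (2 ^ 5 * (n : ℝ) * max βl1 βl2 / α) ^ 2 := (Real.sq_sqrt hXpos.le).symm
      _ ≤ ‖vm‖ ^ 2 := pow_le_pow_left₀ (Real.sqrt_nonneg _) hvm 2
  have hβvm : 32 * (n:ℝ) * βl1 ≤ α * ‖vm‖ ^ 2 := by
    rw [div_le_iff₀ hα0] at hvm2
    have h := mul_le_mul_of_nonneg_left (le_max_left βl1 βl2) (by linarith : (0:ℝ) ≤ (n:ℝ))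
    linarith only [hvm2, h]
  -- the constants
  set s2 := Real.sqrt 2 with hs2def
  set sn := Real.sqrt n with hsndef
  set C := (2:ℝ) ^ ((5:ℝ)/2) * sn * βl1 / (α * ‖vm‖) with hCdef
  set u := ‖vm‖ / (2 * s2) with hudef
  set w := ‖xm‖ / s2 with hwdef
  have hupos : 0 < u := by positivity
  have hwnn : 0 ≤ w := by positivity
  have hu' : ‖vm‖ = 2 * s2 * u := by rw [hudef]; field_simp
  have hw' : ‖xm‖ = s2 * w := by rw [hwdef]; field_simp
  have hrv : r < u := by
    have := (lt_min_iff.mp hr).1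
    rwa [h32] at this
  have hr1 : r < 1 := (lt_min_iff.mp hr).2
  have hC : C ≤ u / 2 := by
    rw [hCdef, hudef, h52, div_div, div_le_div_iff₀ (by positivity) (by positivity)]
    have hstep : (4 * s2 * sn * βl1) * (2 * s2 * 2) ≤ ‖vm‖ * (α * ‖vm‖) := by
      have e : (4 * s2 * sn * βl1) * (2 * s2 * 2) = 16 * (s2 * s2) * (sn * βl1) := by ring
      have e2 : 16 * (s2 * s2) * (sn * βl1) = 32 * (sn * βl1) := by rw [hs2sq]; ring
      have hprod : sn * βl1 ≤ (n:ℝ) * βl1 := mul_le_mul_of_nonneg_right hsnn hβl1.le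
      linarith only [e, e2, hprod, hβvm]
    linarith only [hstep]
  set dd := 1 + w - r with hdddef
  set vv := u - r with hvvdef
  have hdd : 0 < dd := by rw [hdddef]; linarith
  have hvv : 0 < vv := by rw [hvvdef]; linarith
  -- bounds on ym
  obtain ⟨hcont, hb1, hb2, hnm⟩ := hym
  simp only [Mnorm] at hnm
  have hS1 : ∀ τ ≤ (0:ℝ), ‖ym τ‖ ≤ sSup ((fun t => ‖ym t‖) '' Iic 0) :=
    fun τ hτ => le_csSup hb1 ⟨τ, hτ, rfl⟩
  have hS2 : ∀ τ, (0:ℝ) ≤ τ → ‖ym τ‖ / (1 + τ) ≤ sSup ((fun t => ‖ym t‖ / (1 + t)) '' Ici 0) :=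
    fun τ hτ => le_csSup hb2 ⟨τ, hτ, rfl⟩
  have hS1nn : 0 ≤ sSup ((fun t => ‖ym t‖) '' Iic 0) :=
    le_trans (norm_nonneg (ym 0)) (hS1 0 le_rfl)
  have hS2nn : 0 ≤ sSup ((fun t => ‖ym t‖ / (1 + t)) '' Ici 0) :=
    le_trans (by positivity) (hS2 0 le_rfl)
  have hyneg : ∀ τ ≤ (0:ℝ), ‖ym τ‖ ≤ r := fun τ hτ => by
    have h := hS1 τ hτ; linarith only [h, hnm, hS2nn]
  have hypos : ∀ τ, (0:ℝ) ≤ τ → ‖ym τ‖ ≤ r * (1 + τ) := by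
    intro τ hτ
    have h := hS2 τ hτ
    have h1 : ‖ym τ‖ / (1 + τ) ≤ r := by linarith only [h, hnm, hS1nn]
    have h2 : (0:ℝ) < 1 + τ := by linarith
    calc ‖ym τ‖ = ‖ym τ‖ / (1 + τ) * (1 + τ) := by field_simp
      _ ≤ r * (1 + τ) := mul_le_mul_of_nonneg_right h1 h2.le
  -- main pointwise lower bound
  have hmain : ∀ τ : ℝ, dd + vv * |τ| ≤ 1 + ‖zm τ + xm + ym τ‖ := by
    intro τ
    set N := ‖zm τ + xm + ym τ‖ with hN
    have hNnn : 0 ≤ N := norm_nonneg _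
    have hzmb : ‖zm τ - τ • vm‖ ≤ C * |τ| := by
      have := hzm.2.2.2.2 τ
      simpa using this
    have htri : ‖τ • vm + xm‖ ≤ N + (C * |τ| + ‖ym τ‖) := by
      have hid : τ • vm + xm = (zm τ + xm + ym τ) - ((zm τ - τ • vm) + ym τ) := by abel
      rw [hid]
      refine (norm_sub_le _ _).trans ?_
      have h5 := (norm_add_le (zm τ - τ • vm) (ym τ)).trans (add_le_add_left hzmb _)
      linarith only [h5]
    have hsq : ‖τ • vm + xm‖ ^ 2 = (|τ| * ‖vm‖) ^ 2 + ‖xm‖ ^ 2 := by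
      rw [@norm_add_sq_real, real_inner_smul_left, hperp, mul_zero, norm_smul,
        Real.norm_eq_abs]
      ring
    have hperp2 : |τ| * ‖vm‖ + ‖xm‖ ≤ s2 * ‖τ • vm + xm‖ :=
      sqrt2_bound (by positivity) (norm_nonneg _) (norm_nonneg _) hsq
    have hdiv : 2 * (|τ| * u) + w ≤ N + C * |τ| + ‖ym τ‖ := by
      have h' : s2 * (2 * (|τ| * u) + w) ≤ s2 * (N + C * |τ| + ‖ym τ‖) := by
        calc s2 * (2 * (|τ| * u) + w) = |τ| * ‖vm‖ + ‖xm‖ := by rw [hu', hw']; ring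
          _ ≤ s2 * ‖τ • vm + xm‖ := hperp2
          _ ≤ s2 * (N + C * |τ| + ‖ym τ‖) := by
              refine mul_le_mul_of_nonneg_left ?_ hs2pos.le
              linarith only [htri]
      exact le_of_mul_le_mul_left h' hs2pos
    have hCa : C * |τ| ≤ u / 2 * |τ| := mul_le_mul_of_nonneg_right hC (abs_nonneg τ)
    have hua : 0 ≤ |τ| * u := mul_nonneg (abs_nonneg τ) hupos.le
    rcases le_or_gt τ 0 with h | h
    · have hy := hyneg τ h
      have hra : 0 ≤ r * |τ| := mul_nonneg hr0.le (abs_nonneg τ)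
      rw [hdddef, hvvdef]
      linarith only [hdiv, hy, hCa, hua, hra]
    · have hy := hypos τ h.le
      have habs : |τ| = τ := abs_of_pos h
      rw [habs] at hdiv hCa hua
      rw [hdddef, hvvdef, habs]
      linarith only [hdiv, hy, hCa, hua]
  -- pointwise bound by an integrable function
  have hp1 : -(α + 1) < -1 := by linarith
  have hp2 : -(α + 2) < -1 := by linarith
  obtain ⟨hint1, hval1⟩ := abs_int hdd hvv hp1
  obtain ⟨hint2, hval2⟩ := abs_int hdd hvv hp2
  set g : ℝ → ℝ :=
    fun τ => βl1 * (dd + vv * |τ|) ^ (-(α + 1)) + max βl2 βs2 * (dd + vv * |τ|) ^ (-(α + 2))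
    with hgdef
  have hg : Integrable g := (hint1.const_mul βl1).add (hint2.const_mul (max βl2 βs2))
  have hpt : ∀ τ : ℝ, ‖F (zm τ + xm + ym τ)‖ ≤ g τ := by
    intro τ
    set y := zm τ + xm + ym τ with hy
    have hbase : 0 < dd + vv * |τ| := by
      have hmn := mul_nonneg hvv.le (abs_nonneg τ); linarith only [hmn, hdd]
    have h1 : ‖F y‖ ≤ ‖gradient Vl y‖ + ‖gradient Vs y‖ := by
      rw [hF, hFl, hFs]
      simpa [norm_neg] using norm_add_le (-(gradient Vl y)) (-(gradient Vs y))
    have hA := hVl.2.2.1 y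
    have hB := hVs.2.2.1 y
    have h2 : (1 + ‖y‖) ^ (-(α + 1)) ≤ (dd + vv * |τ|) ^ (-(α + 1)) :=
      Real.rpow_le_rpow_of_nonpos hbase (hmain τ) (by linarith)
    have h3 : (1 + ‖y‖) ^ (-(α + 2)) ≤ (dd + vv * |τ|) ^ (-(α + 2)) :=
      Real.rpow_le_rpow_of_nonpos hbase (hmain τ) (by linarith)
    have e1 : βl1 * (1 + ‖y‖) ^ (-(α + 1)) ≤ βl1 * (dd + vv * |τ|) ^ (-(α + 1)) :=
      mul_le_mul_of_nonneg_left h2 hβl1.le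
    have e2 : βs2 * (1 + ‖y‖) ^ (-(α + 2)) ≤ max βl2 βs2 * (dd + vv * |τ|) ^ (-(α + 2)) :=
      mul_le_mul (le_max_right _ _) h3 (Real.rpow_nonneg (by positivity) _)
        (le_trans hβl2.le (le_max_left _ _))
    have hFb : ‖F y‖ ≤ βl1 * (1 + ‖y‖) ^ (-(α + 1)) + βs2 * (1 + ‖y‖) ^ (-(α + 2)) := by
      linarith only [h1, hA, hB]
    simp only [hgdef]
    linarith only [hFb, e1, e2]
  have hnorm_le : ‖∫ τ : ℝ, F (zm τ + xm + ym τ)‖ ≤ ∫ τ : ℝ, g τ :=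
    norm_integral_le_of_norm_le hg (Eventually.of_forall hpt)
  -- compute the integral of g
  have hvalg : ∫ τ : ℝ, g τ =
      βl1 * (2 * (dd ^ (-α) / (α * vv))) +
        max βl2 βs2 * (2 * (dd ^ (-(α + 1)) / ((α + 1) * vv))) := by
    simp only [hgdef]
    rw [integral_add (hint1.const_mul βl1) (hint2.const_mul (max βl2 βs2)),
      integral_const_mul, integral_const_mul, hval1, hval2]
    rw [show -(α + 1) + 1 = -α by ring, show -(α + 2) + 1 = -(α + 1) by ring,
      neg_neg, neg_neg]
  refine hnorm_le.trans ?_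
  rw [hvalg]
  have hP : (0:ℝ) < dd ^ α := Real.rpow_pos_of_pos hdd α
  have e1 : dd ^ (-α) = (dd ^ α)⁻¹ := Real.rpow_neg hdd.le α
  have e2 : dd ^ (-(α + 1)) = (dd ^ α * dd)⁻¹ := by
    rw [Real.rpow_neg hdd.le, Real.rpow_add hdd, Real.rpow_one]
  rw [e1, e2]
  have key : βl1 * (2 * ((dd ^ α)⁻¹ / (α * vv))) +
      max βl2 βs2 * (2 * ((dd ^ α * dd)⁻¹ / ((α + 1) * vv))) =
      2 / (vv * dd ^ α) * (βl1 / α + max βl2 βs2 / ((α + 1) * dd)) := by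
    field_simp
  rw [key]
  have hXnn : 0 ≤ βl1 / α + max βl2 βs2 / ((α + 1) * dd) := by
    have : 0 ≤ max βl2 βs2 := le_trans hβl2.le (le_max_left _ _)
    have h1 : 0 ≤ βl1 / α := div_nonneg hβl1.le hα0.le
    have h2 : 0 ≤ max βl2 βs2 / ((α + 1) * dd) :=
      div_nonneg this (by positivity)
    linarith only [h1, h2]
  have hden : 0 < vv * dd ^ α := mul_pos hvv hP
  refine mul_le_mul_of_nonneg_right ?_ hXnn
  rw [div_le_div_iff₀ hden hden]
  exact mul_le_mul_of_nonneg_right (by linarith only [hsn1]) hden.le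

end Paper
end
end

section
/- Let v_−, x_− ∈ ℝⁿ with v_−·x_− = 0 and |v_−| ≥ μ(|x_−|), and let 0 < r < min(|v_−|/2^{3/2}, 1 + |x_−|/√2). Then for every f ∈ M_r, setting k̃(v_−,x_−,f) := v_− + ∫_{−∞}^∞ F(z_−(v_−,x_−,τ)+f(τ)) dτ, one has |k̃(v_−,x_−,f) − v_−| ≤ (2√n / ((|v_−|/(2√2) − r)(1 + |x_−|/√2 − r)^α)) · (β^l_1/α + β₂/((α+1)(1 + |x_−|/√2 − r))). -/
open MeasureTheory Real Filter Set Topology RealInnerProductSpace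

noncomputable section

namespace Paper

variable {n : ℕ}

lemma my_integral_aux (A B p : ℝ) (hA : 0 < A) (hB : 0 < B) (hp : 0 < p) :
    IntegrableOn (fun x => (A + B * x) ^ (-(p + 1))) (Ioi (0:ℝ)) ∧
      ∫ x in Ioi (0:ℝ), (A + B * x) ^ (-(p + 1)) = A ^ (-p) / (p * B) := by
  have hG : ∀ x ∈ Ici (0:ℝ),
      HasDerivAt (fun x => -(A + B * x) ^ (-p) / (p * B)) ((A + B * x) ^ (-(p + 1))) x := by
    intro x hx
    have hpos : 0 < A + B * x := by
      have : 0 ≤ B * x := mul_nonneg hB.le hx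
      linarith
    have h1 : HasDerivAt (fun x : ℝ => A + B * x) B x := by
      simpa using ((hasDerivAt_id x).const_mul B).const_add A
    have h2 : HasDerivAt (fun y : ℝ => y ^ (-p)) (-p * (A + B * x) ^ (-p - 1)) (A + B * x) :=
      Real.hasDerivAt_rpow_const (Or.inl hpos.ne')
    have h3 := ((h2.comp x h1).neg).div_const (p * B)
    refine h3.congr_deriv ?_
    rw [show (-(p + 1)) = -p - 1 by ring]
    have := hp.ne'
    have := hB.ne'
    field_simp
  have hnn : ∀ x ∈ Ioi (0:ℝ), 0 ≤ (A + B * x) ^ (-(p + 1)) := by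
    intro x hx
    exact Real.rpow_nonneg (by nlinarith [hx.out, hB.le] : (0:ℝ) ≤ A + B * x) _
  have htend : Tendsto (fun x => -(A + B * x) ^ (-p) / (p * B)) atTop (𝓝 0) := by
    have h1 : Tendsto (fun x : ℝ => A + B * x) atTop atTop :=
      tendsto_atTop_add_const_left _ A (tendsto_id.const_mul_atTop hB)
    have h2 := ((tendsto_rpow_neg_atTop hp).comp h1).neg.div_const (p * B)
    simpa using h2
  refine ⟨integrableOn_Ioi_deriv_of_nonneg' hG hnn htend, ?_⟩
  rw [integral_Ioi_of_hasDerivAt_of_nonneg' hG hnn htend]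
  rw [mul_zero, add_zero]
  ring

lemma my_integral_aux2 (A B p : ℝ) (hA : 0 < A) (hB : 0 < B) (hp : 0 < p) :
    Integrable (fun x : ℝ => (A + B * |x|) ^ (-(p + 1))) ∧
      ∫ x : ℝ, (A + B * |x|) ^ (-(p + 1)) = 2 * (A ^ (-p) / (p * B)) := by
  obtain ⟨hi, hv⟩ := my_integral_aux A B p hA hB hp
  have hIoi : IntegrableOn (fun x : ℝ => (A + B * |x|) ^ (-(p + 1))) (Ioi 0) := by
    refine hi.congr_fun (fun x hx => ?_) measurableSet_Ioi
    rw [abs_of_pos hx]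
  have hIic : IntegrableOn (fun x : ℝ => (A + B * |x|) ^ (-(p + 1))) (Iic 0) := by
    rw [← Measure.map_neg_eq_self (volume : Measure ℝ)]
    have m : MeasurableEmbedding fun x : ℝ => -x := (Homeomorph.neg ℝ).measurableEmbedding
    rw [m.integrableOn_map_iff]
    simp_rw [Function.comp_def, abs_neg, neg_preimage, neg_Iic, neg_zero]
    exact (integrableOn_Ici_iff_integrableOn_Ioi).mpr hIoi
  have hInt : Integrable (fun x : ℝ => (A + B * |x|) ^ (-(p + 1))) := by
    rw [← integrableOn_univ, ← Iic_union_Ioi (a := (0:ℝ))]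
    exact hIic.union hIoi
  refine ⟨hInt, ?_⟩
  rw [show (∫ x : ℝ, (A + B * |x|) ^ (-(p + 1)))
      = 2 * ∫ x in Ioi (0:ℝ), (A + B * x) ^ (-(p + 1)) from
    integral_comp_abs (f := fun u => (A + B * u) ^ (-(p + 1))), hv]

set_option maxHeartbeats 1000000 in
theorem statement_14
    (n : ℕ) (hn : 2 ≤ n) (α : ℝ) (hα0 : 0 < α) (hα1 : α ≤ 1)
    (Vl Vs : Euc n → ℝ) (βl0 βl1 βl2 βs1 βs2 βs3 : ℝ)
    (hβl0 : 0 < βl0) (hβl1 : 0 < βl1) (hβl2 : 0 < βl2)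
    (hβs1 : 0 < βs1) (hβs2 : 0 < βs2) (hβs3 : 0 < βs3)
    (hVl : LongRange α βl0 βl1 βl2 Vl) (hVs : ShortRange α βs1 βs2 βs3 Vs)
    (Fl Fs F : Euc n → Euc n)
    (hFl : ∀ y, Fl y = -gradient Vl y) (hFs : ∀ y, Fs y = -gradient Vs y)
    (hF : ∀ y, F y = Fl y + Fs y)
    (vm xm : Euc n) (hperp : ⟪vm, xm⟫ = 0) (hvm : Real.sqrt (2 ^ 5 * (n : ℝ) * max βl1 βl2 / (α * (1 + ‖xm‖ / Real.sqrt 2) ^ α)) ≤ ‖vm‖)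
    (zm : ℝ → Euc n) (hzm : IsFreeSol Fl xm vm atBot
      (2 ^ ((5:ℝ)/2) * Real.sqrt n * βl1 /
        (α * ‖vm‖ * (1 + ‖xm‖ / Real.sqrt 2) ^ α)) zm)
    (r : ℝ) (hr0 : 0 < r) (hr : r < min (‖vm‖ / 2 ^ ((3:ℝ)/2)) (1 + ‖xm‖ / Real.sqrt 2))
 :
    ∀ f : ℝ → Euc n, MemM r f →
      ‖∫ τ : ℝ, F (zm τ + f τ)‖ ≤
        2 * Real.sqrt n / ((‖vm‖ / (2 * Real.sqrt 2) - r) * (1 + ‖xm‖ / Real.sqrt 2 - r) ^ α) *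
          (βl1 / α + (max βl2 βs2) / ((α + 1) * (1 + ‖xm‖ / Real.sqrt 2 - r))) := by
  intro f hf
  obtain ⟨hfc, hbd1, hbd2, hfnorm⟩ := hf
  set s2 := Real.sqrt 2 with hs2def
  have hs2pos : 0 < s2 := Real.sqrt_pos.mpr two_pos
  have hs2sq : s2 * s2 = 2 := Real.mul_self_sqrt two_pos.le
  have hsn : 1 ≤ Real.sqrt n := by
    rw [show (1:ℝ) = Real.sqrt 1 by simp]
    exact Real.sqrt_le_sqrt (by exact_mod_cast hn.trans' one_le_two)
  have hn0 : (0:ℝ) < n := by exact_mod_cast lt_of_lt_of_le two_pos hn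
  set v := ‖vm‖ with hvdef
  set P := (1 + ‖xm‖ / s2) ^ α with hPdef
  have hxnn : 0 ≤ ‖xm‖ := norm_nonneg _
  have hbase : 0 < 1 + ‖xm‖ / s2 := by positivity
  have hP : 0 < P := Real.rpow_pos_of_pos hbase α
  have h32 : (2:ℝ) ^ ((3:ℝ)/2) = 2 * s2 := by
    rw [show (3:ℝ)/2 = 1 + 1/2 by norm_num, Real.rpow_add two_pos, Real.rpow_one,
      ← Real.sqrt_eq_rpow]
  have h52 : (2:ℝ) ^ ((5:ℝ)/2) = 4 * s2 := by
    rw [show (5:ℝ)/2 = 2 + 1/2 by norm_num, Real.rpow_add two_pos, ← Real.sqrt_eq_rpow,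
      show ((2:ℝ):ℝ) ^ (2:ℝ) = ((2:ℝ):ℝ) ^ (2:ℕ) by rw [Real.rpow_two]]
    norm_num
    exact hs2def.symm
  obtain ⟨hra, hrb⟩ := lt_min_iff.mp hr
  rw [h32] at hra
  set A := 1 + ‖xm‖ / s2 - r with hAdef
  set B := v / (2 * s2) - r with hBdef
  have hA : 0 < A := by rw [hAdef]; linarith
  have hB : 0 < B := by rw [hBdef]; linarith
  have harg : 0 < 2 ^ 5 * (n:ℝ) * max βl1 βl2 / (α * P) :=
    div_pos (mul_pos (mul_pos (by norm_num) hn0) (lt_max_iff.mpr (Or.inl hβl1)))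
      (mul_pos hα0 hP)
  have hv0 : 0 < v := lt_of_lt_of_le (Real.sqrt_pos.mpr harg) hvm
  have hkey : 2 ^ 5 * (n:ℝ) * βl1 ≤ α * P * v ^ 2 := by
    have h1 : 2 ^ 5 * (n:ℝ) * max βl1 βl2 / (α * P) ≤ v ^ 2 := by
      calc 2 ^ 5 * (n:ℝ) * max βl1 βl2 / (α * P)
          = Real.sqrt (2 ^ 5 * (n:ℝ) * max βl1 βl2 / (α * P)) ^ 2 :=
            (Real.sq_sqrt harg.le).symm
        _ ≤ v ^ 2 := pow_le_pow_left₀ (Real.sqrt_nonneg _) hvm 2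
    rw [div_le_iff₀ (mul_pos hα0 hP)] at h1
    have h2 : 2 ^ 5 * (n:ℝ) * βl1 ≤ 2 ^ 5 * (n:ℝ) * max βl1 βl2 :=
      mul_le_mul_of_nonneg_left (le_max_left _ _) (by positivity)
    nlinarith
  have hsn2 : Real.sqrt n ≤ n := by
    nlinarith [Real.sq_sqrt hn0.le, hsn]
  have hC : 2 ^ ((5:ℝ)/2) * Real.sqrt n * βl1 / (α * v * P) ≤ v / (4 * s2) := by
    rw [h52, div_le_div_iff₀ (mul_pos (mul_pos hα0 hv0) hP) (by positivity),
      show 4 * s2 * Real.sqrt n * βl1 * (4 * s2) = 16 * (s2 * s2) * (Real.sqrt n * βl1) by ring,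
      hs2sq, show v * (α * v * P) = α * P * v ^ 2 by ring]
    linarith [mul_le_mul_of_nonneg_right hsn2 hβl1.le, hkey]
  have hgrow : ∀ t, ‖zm t - xm - t • vm‖ ≤ v / (4 * s2) * |t| := by
    intro t
    exact le_trans (hzm.2.2.2.2 t) (mul_le_mul_of_nonneg_right hC (abs_nonneg t))
  -- bound on f
  have hS1nn : 0 ≤ sSup ((fun t => ‖f t‖) '' Iic 0) :=
    le_trans (norm_nonneg (f 0)) (le_csSup hbd1 ⟨0, by simp, rfl⟩)
  have hS2nn : 0 ≤ sSup ((fun t => ‖f t‖ / (1 + t)) '' Ici 0) :=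
    le_trans (by positivity) (le_csSup hbd2 ⟨0, by simp, rfl⟩)
  have hfub : ∀ τ, ‖f τ‖ ≤ r + r * |τ| := by
    intro τ
    unfold Mnorm at hfnorm
    rcases le_total τ 0 with h | h
    · have h1 : ‖f τ‖ ≤ sSup ((fun t => ‖f t‖) '' Iic 0) := le_csSup hbd1 ⟨τ, h, rfl⟩
      nlinarith [abs_nonneg τ, hr0.le]
    · have h1 : ‖f τ‖ / (1 + τ) ≤ sSup ((fun t => ‖f t‖ / (1 + t)) '' Ici 0) :=
        le_csSup hbd2 ⟨τ, h, rfl⟩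
      have h2 : ‖f τ‖ / (1 + τ) ≤ r := by linarith
      rw [div_le_iff₀ (by linarith : (0:ℝ) < 1 + τ)] at h2
      rw [abs_of_nonneg h]
      nlinarith
  -- lower bound on 1 + ‖zm τ + f τ‖
  have hlow : ∀ τ, A + B * |τ| ≤ 1 + ‖zm τ + f τ‖ := by
    intro τ
    have hin : ⟪xm, τ • vm⟫ = 0 := by
      rw [real_inner_smul_right, real_inner_comm, hperp, mul_zero]
    have hsq : ‖xm + τ • vm‖ ^ 2 = ‖xm‖ ^ 2 + (|τ| * v) ^ 2 := by
      rw [norm_add_sq_real, hin, norm_smul, Real.norm_eq_abs]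
      ring
    have h1 : (‖xm‖ + |τ| * v) ^ 2 ≤ 2 * ‖xm + τ • vm‖ ^ 2 := by
      nlinarith [sq_nonneg (‖xm‖ - |τ| * v)]
    have hax : (‖xm‖ + |τ| * v) / s2 ≤ ‖xm + τ • vm‖ := by
      have h2 : ‖xm‖ + |τ| * v ≤ s2 * ‖xm + τ • vm‖ := by
        calc ‖xm‖ + |τ| * v = Real.sqrt ((‖xm‖ + |τ| * v) ^ 2) := by
              rw [Real.sqrt_sq (by positivity)]
          _ ≤ Real.sqrt (2 * ‖xm + τ • vm‖ ^ 2) := Real.sqrt_le_sqrt h1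
          _ = s2 * ‖xm + τ • vm‖ := by
              rw [Real.sqrt_mul (by norm_num : (0:ℝ) ≤ 2), Real.sqrt_sq (norm_nonneg _),
                ← hs2def]
      rw [div_le_iff₀ hs2pos]
      linarith
    have hax' : ‖xm‖ + |τ| * v ≤ s2 * ‖xm + τ • vm‖ := by
      rw [div_le_iff₀ hs2pos] at hax
      linarith
    have hgw := hgrow τ
    have hgw' : 4 * s2 * ‖zm τ - xm - τ • vm‖ ≤ v * |τ| := by
      rw [div_mul_eq_mul_div, le_div_iff₀ (by positivity : (0:ℝ) < 4 * s2)] at hgw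
      linarith
    have hfτ := hfub τ
    have t1 : ‖zm τ‖ ≤ ‖zm τ + f τ‖ + ‖f τ‖ := by
      have h := norm_add_le (zm τ + f τ) (-(f τ))
      simpa using h
    have t2 : ‖xm + τ • vm‖ ≤ ‖zm τ‖ + ‖zm τ - xm - τ • vm‖ := by
      have h := norm_sub_le (zm τ) (zm τ - xm - τ • vm)
      have e : zm τ - (zm τ - xm - τ • vm) = xm + τ • vm := by abel
      rwa [e] at h
    have hfinal : s2 * (A + B * |τ|) ≤ s2 * (1 + ‖zm τ + f τ‖) := by
      have e1 : s2 * (A + B * |τ|)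
          = s2 + ‖xm‖ - s2 * r + v / 2 * |τ| - s2 * r * |τ| := by
        rw [hAdef, hBdef]
        field_simp
        ring
      rw [e1]
      have m1 : s2 * ‖xm + τ • vm‖ ≤ s2 * (‖zm τ‖ + ‖zm τ - xm - τ • vm‖) :=
        mul_le_mul_of_nonneg_left t2 hs2pos.le
      have m2 : s2 * ‖zm τ‖ ≤ s2 * (‖zm τ + f τ‖ + ‖f τ‖) :=
        mul_le_mul_of_nonneg_left t1 hs2pos.le
      have m3 : s2 * ‖f τ‖ ≤ s2 * (r + r * |τ|) :=
        mul_le_mul_of_nonneg_left hfτ hs2pos.le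
      linarith [hax', m1, m2, m3, hgw', mul_nonneg hv0.le (abs_nonneg τ)]
    exact le_of_mul_le_mul_left hfinal hs2pos
  have hABpos : ∀ τ : ℝ, 0 < A + B * |τ| := fun τ =>
    add_pos_of_pos_of_nonneg hA (mul_nonneg hB.le (abs_nonneg _))
  -- pointwise bound for the integrand
  have hptw : ∀ τ, ‖F (zm τ + f τ)‖ ≤
      βl1 * (A + B * |τ|) ^ (-(α + 1)) + βs2 * (A + B * |τ|) ^ (-(α + 2)) := by
    intro τ
    have hy := hlow τ
    have h1 : ‖Fl (zm τ + f τ)‖ ≤ βl1 * (A + B * |τ|) ^ (-(α + 1)) := by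
      rw [hFl, norm_neg]
      refine le_trans (hVl.2.2.1 _) ?_
      exact mul_le_mul_of_nonneg_left
        (Real.rpow_le_rpow_of_nonpos (hABpos τ) hy (by linarith)) hβl1.le
    have h2 : ‖Fs (zm τ + f τ)‖ ≤ βs2 * (A + B * |τ|) ^ (-(α + 2)) := by
      rw [hFs, norm_neg]
      refine le_trans (hVs.2.2.1 _) ?_
      exact mul_le_mul_of_nonneg_left
        (Real.rpow_le_rpow_of_nonpos (hABpos τ) hy (by linarith)) hβs2.le
    calc ‖F (zm τ + f τ)‖ = ‖Fl (zm τ + f τ) + Fs (zm τ + f τ)‖ := by rw [hF]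
      _ ≤ ‖Fl (zm τ + f τ)‖ + ‖Fs (zm τ + f τ)‖ := norm_add_le _ _
      _ ≤ _ := add_le_add h1 h2
  obtain ⟨hint1, hval1⟩ := my_integral_aux2 A B α hA hB hα0
  obtain ⟨hint2, hval2⟩ := my_integral_aux2 A B (α + 1) hA hB (by linarith)
  simp only [show α + 1 + 1 = α + 2 from by ring] at hint2 hval2
  have hg_int : Integrable (fun τ : ℝ =>
      βl1 * (A + B * |τ|) ^ (-(α + 1)) + βs2 * (A + B * |τ|) ^ (-(α + 2))) :=
    (hint1.const_mul βl1).add (hint2.const_mul βs2)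
  have hFc : Continuous F := by
    have hgl : Continuous (gradient Vl) := by
      have h1 : Continuous (fderiv ℝ Vl) := hVl.1.continuous_fderiv (by norm_num)
      exact (InnerProductSpace.toDual ℝ (Euc n)).symm.continuous.comp h1
    have hgs : Continuous (gradient Vs) := by
      have h1 : Continuous (fderiv ℝ Vs) := hVs.1.continuous_fderiv (by norm_num)
      exact (InnerProductSpace.toDual ℝ (Euc n)).symm.continuous.comp h1
    have : F = fun y => -gradient Vl y + -gradient Vs y :=
      funext fun y => by rw [hF y, hFl y, hFs y]
    rw [this]
    exact hgl.neg.add hgs.neg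
  have hmeas : AEStronglyMeasurable (fun τ : ℝ => F (zm τ + f τ)) volume :=
    (hFc.comp ((hzm.1.continuous).add hfc)).aestronglyMeasurable
  have hbound := norm_integral_le_of_norm_le hg_int (Eventually.of_forall hptw)
  refine le_trans hbound ?_
  rw [integral_add (hint1.const_mul βl1) (hint2.const_mul βs2),
    integral_const_mul, integral_const_mul, hval1, hval2]
  -- final numeric comparison
  have hAα : 0 < A ^ α := Real.rpow_pos_of_pos hA α
  have e1 : A ^ (-α) = (A ^ α)⁻¹ := Real.rpow_neg hA.le α
  have e2 : A ^ (-(α + 1)) = (A ^ α * A)⁻¹ := by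
    rw [Real.rpow_neg hA.le, Real.rpow_add hA, Real.rpow_one]
  have hBA : 0 < B * A ^ α := mul_pos hB hAα
  calc βl1 * (2 * (A ^ (-α) / (α * B))) + βs2 * (2 * (A ^ (-(α + 1)) / ((α + 1) * B)))
      = 2 / (B * A ^ α) * (βl1 / α + βs2 / ((α + 1) * A)) := by
        rw [e1, e2]
        field_simp
    _ ≤ 2 * Real.sqrt n / (B * A ^ α) * (βl1 / α + max βl2 βs2 / ((α + 1) * A)) := by
        apply mul_le_mul
        · exact (div_le_div_iff_of_pos_right hBA).mpr (by linarith)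
        · exact add_le_add_right
            ((div_le_div_iff_of_pos_right (mul_pos (by linarith : (0:ℝ) < α + 1) hA)).mpr
              (le_max_right _ _)) _
        · exact add_nonneg (div_nonneg hβl1.le hα0.le)
            (div_nonneg hβs2.le (mul_nonneg (by linarith) hA.le))
        · exact div_nonneg (by positivity) hBA.le

end Paper
end
end
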